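/- arXiv:0808.2766 — 4 statements merged into one kernel-verified Lean document; each statement's English description precedes it below -/
import Mathlib

section
/- Let A be a countable subset of ℂ, and for each α ∈ A and each natural number s ≥ 0 let E_{α,s} be a dense subset of ℂ. Then there exists an entire function f : ℂ → ℂ which is not a polynomial such that for every α ∈ A and every s ≥ 0 the s-th derivative of f satisfies f^(s)(α) ∈ E_{α,s}. -/
/-!
Enumerate `A ∪ {β}`, for some `β ∉ A`, as a sequence `a` in which every point recurs infinitely
often, and take `f = ∑ cₙ ∏_{k<n} (z - aₖ)`. The `n`-th node polynomial vanishes at `aₙ` to order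
exactly `mₙ = #{k < n | aₖ = aₙ}`, and every later one to a higher order, so `f^(mₙ)(aₙ)` depends
only on `c₀, …, cₙ` and is an affine function of `cₙ` with nonzero slope. Density of the target set
lets us choose `cₙ` arbitrarily small, hence the series converges locally uniformly. Asking for
`f^(s)(β) ≠ 0` for every `s` rules out polynomials.
-/

open Polynomial Filter Topology Metric Finset

theorem exists_seq_forall_sum_range_succ {α M : Type*} [AddCommMonoid M] (g : ℕ → α → M)
    (R : ℕ → α → M → Prop) (h : ∀ n S, ∃ x, R n x (S + g n x)) :
    ∃ x : ℕ → α, ∀ n, R n (x n) (∑ k ∈ range (n + 1), g k (x k)) := by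
  choose φ hφ using h
  let S : ℕ → M := fun n => Nat.rec 0 (fun k T => T + g k (φ k T)) n
  refine ⟨fun n => φ n (S n), fun n => ?_⟩
  have hS : ∀ n, S n = ∑ k ∈ range n, g k (φ k (S k)) := by
    intro n
    induction n with
    | zero => rfl
    | succ n ih => rw [sum_range_succ, ← ih]
  rw [sum_range_succ, ← hS]
  exact hφ n (S n)

theorem Dense.exists_add_mul_mem {𝕜 : Type*} [NormedField 𝕜] {E : Set 𝕜} (hE : Dense E)
    (x : 𝕜) {D : 𝕜} (hD : D ≠ 0) {U : Set 𝕜} (hU : U ∈ 𝓝 0) : ∃ c ∈ U, x + c * D ∈ E := by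
  let φ : 𝕜 ≃ₜ 𝕜 := (Homeomorph.mulRight₀ D hD).trans (Homeomorph.addLeft x)
  obtain ⟨c, hcE, hcU⟩ := (hE.preimage φ.isOpenMap).inter_nhds_nonempty hU
  exact ⟨c, hcU, hcE⟩

theorem IsCompact.eventually_forall_norm_mul_le {𝕜 X : Type*} [NormedField 𝕜]
    [TopologicalSpace X] {K : Set X} (hK : IsCompact K) {g : X → 𝕜} (hg : ContinuousOn g K)
    {δ : ℝ} (hδ : 0 < δ) : ∀ᶠ c in 𝓝 (0 : 𝕜), ∀ z ∈ K, ‖c * g z‖ ≤ δ := by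
  obtain ⟨M, hM⟩ := hK.exists_bound_of_continuousOn hg
  have hlim : Tendsto (fun c : 𝕜 => ‖c‖ * M) (𝓝 0) (𝓝 0) :=
    (by fun_prop : Continuous fun c : 𝕜 => ‖c‖ * M).tendsto' 0 0 (by simp)
  filter_upwards [hlim.eventually (ge_mem_nhds hδ)] with c hc z hz
  rw [norm_mul]
  exact (mul_le_mul_of_nonneg_left (hM z hz) (norm_nonneg c)).trans hc

theorem tendstoLocallyUniformly_sum_range_of_norm_le_on_closedBall {V F : Type*}
    [SeminormedAddCommGroup V] [NormedAddCommGroup F] [CompleteSpace F] {f : ℕ → V → F}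
    {u : ℕ → ℝ} (hu : Summable u) (hf : ∀ n : ℕ, ∀ z ∈ closedBall (0 : V) n, ‖f n z‖ ≤ u n) :
    TendstoLocallyUniformly (fun N z => ∑ n ∈ range N, f n z) (fun z => ∑' n, f n z) atTop := by
  refine tendstoLocallyUniformly_of_forall_exists_nhds fun z => ?_
  obtain ⟨R, hR⟩ := exists_nat_gt ‖z‖
  refine ⟨closedBall 0 R, closedBall_mem_nhds_of_mem (by simpa using hR), ?_⟩
  refine tendstoUniformlyOn_tsum_nat_eventually hu ?_
  filter_upwards [eventually_ge_atTop R] with n hn w hw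
  exact hf n w (closedBall_subset_closedBall (by exact_mod_cast hn) hw)

protected theorem Polynomial.iteratedDeriv {𝕜 : Type*} [NontriviallyNormedField 𝕜] (p : 𝕜[X])
    (s : ℕ) : iteratedDeriv s (fun x => p.eval x) = fun x => (derivative^[s] p).eval x := by
  induction s with
  | zero => simp
  | succ s ih =>
    ext x
    rw [iteratedDeriv_succ, ih, Polynomial.deriv, Function.iterate_succ_apply']

theorem Polynomial.iteratedDeriv_natDegree_succ {𝕜 : Type*} [NontriviallyNormedField 𝕜]
    (p : 𝕜[X]) : iteratedDeriv (p.natDegree + 1) (fun x => p.eval x) = 0 := by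
  ext x
  simp only [Polynomial.iteratedDeriv, iterate_derivative_eq_zero (Nat.lt_succ_self _),
    eval_zero, Pi.zero_apply]

theorem TendstoLocallyUniformly.iteratedDeriv {ι : Type*} {l : Filter ι} {F : ι → ℂ → ℂ}
    {f : ℂ → ℂ} (hf : TendstoLocallyUniformly F f l) (hF : ∀ i, Differentiable ℂ (F i))
    (s : ℕ) : TendstoLocallyUniformly (fun i => iteratedDeriv s (F i)) (iteratedDeriv s f) l := by
  induction s with
  | zero => simpa using hf
  | succ s ih =>
    rw [← tendstoLocallyUniformlyOn_univ] at ih ⊢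
    have hdiff : ∀ i, DifferentiableOn ℂ (_root_.iteratedDeriv s (F i)) Set.univ := fun i =>
      ((hF i).contDiff.differentiable_iteratedDeriv s (WithTop.coe_lt_top _)).differentiableOn
    simp only [iteratedDeriv_succ]
    exact ih.deriv (Eventually.of_forall hdiff) isOpen_univ

theorem iteratedDeriv_eq_eval_sum_range_of_eval_iterate_derivative_eq_zero {P : ℕ → ℂ[X]}
    {f : ℂ → ℂ} (hf : TendstoLocallyUniformly (fun N z => (∑ k ∈ range N, P k).eval z) f atTop)
    {s M : ℕ} {γ : ℂ} (hP : ∀ k ≥ M, (derivative^[s] (P k)).eval γ = 0) :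
    iteratedDeriv s f γ = (derivative^[s] (∑ k ∈ range M, P k)).eval γ := by
  have hlim : Tendsto (fun N => ∑ k ∈ range N, (derivative^[s] (P k)).eval γ) atTop
      (𝓝 (iteratedDeriv s f γ)) := by
    have := ((hf.iteratedDeriv (fun N => Polynomial.differentiable _) s).tendstoLocallyUniformlyOn
      (s := Set.univ)).tendsto_at (Set.mem_univ γ)
    simp only [Polynomial.iteratedDeriv] at this
    simpa only [iterate_derivative_sum, eval_finsetSum] using this
  have hsum : HasSum (fun k => (derivative^[s] (P k)).eval γ)
      (∑ k ∈ range M, (derivative^[s] (P k)).eval γ) :=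
    hasSum_sum_of_ne_finset_zero fun k hk => hP k (by simpa using hk)
  rw [tendsto_nhds_unique hlim hsum.tendsto_sum_nat, iterate_derivative_sum, eval_finsetSum]

section NodePolynomial

variable {R : Type*} [CommRing R] [IsDomain R]

noncomputable def nodePoly (a : ℕ → R) (n : ℕ) : R[X] := ∏ k ∈ range n, (X - C (a k))

theorem nodePoly_ne_zero (a : ℕ → R) (n : ℕ) : nodePoly a n ≠ 0 :=
  prod_ne_zero_iff.mpr fun k _ => X_sub_C_ne_zero (a k)

variable [DecidableEq R]

theorem rootMultiplicity_nodePoly (a : ℕ → R) (n : ℕ) (γ : R) :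
    (nodePoly a n).rootMultiplicity γ = Nat.count (fun k => a k = γ) n := by
  have hroots : (nodePoly a n).roots = (range n).val.map a := by
    rw [← roots_multiset_prod_X_sub_C ((range n).val.map a), Multiset.map_map]
    rfl
  rw [← count_roots, hroots, Multiset.count_map, Nat.count_eq_card_filter_range]
  simp_rw [eq_comm (a := γ)]
  rfl

theorem eval_iterate_derivative_nodePoly_eq_zero (a : ℕ → R) {n s : ℕ} {γ : R}
    (hs : s < Nat.count (fun k => a k = γ) n) : (derivative^[s] (nodePoly a n)).eval γ = 0 :=
  isRoot_iterate_derivative_of_lt_rootMultiplicity (rootMultiplicity_nodePoly a n γ ▸ hs)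

theorem eval_iterate_derivative_nodePoly_ne_zero [CharZero R] (a : ℕ → R) (n : ℕ) (γ : R) :
    (derivative^[Nat.count (fun k => a k = γ) n] (nodePoly a n)).eval γ ≠ 0 := by
  rw [← rootMultiplicity_nodePoly, eval_iterate_derivative_rootMultiplicity, nsmul_eq_mul]
  exact mul_ne_zero (Nat.cast_ne_zero.mpr (Nat.factorial_ne_zero _))
    (eval_divByMonic_pow_rootMultiplicity_ne_zero γ (nodePoly_ne_zero a n))

end NodePolynomial

theorem exists_differentiable_forall_iteratedDeriv_mem_of_infinite (a : ℕ → ℂ)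
    (ha : ∀ n, {k | a k = a n}.Infinite) (E : ℂ → ℕ → Set ℂ) (hE : ∀ n s, Dense (E (a n) s)) :
    ∃ f : ℂ → ℂ, Differentiable ℂ f ∧ ∀ n s, iteratedDeriv s f (a n) ∈ E (a n) s := by
  set m : ℕ → ℕ := fun n => Nat.count (fun k => a k = a n) n with hm
  obtain ⟨c, hc⟩ := exists_seq_forall_sum_range_succ (fun k (x : ℂ) => C x * nodePoly a k)
    (fun n x S => (∀ z ∈ closedBall (0 : ℂ) n, ‖x * (nodePoly a n).eval z‖ ≤ (1 / 2) ^ n) ∧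
      (derivative^[m n] S).eval (a n) ∈ E (a n) (m n)) fun n S => by
    have hsmall := (isCompact_closedBall (0 : ℂ) n).eventually_forall_norm_mul_le
      (nodePoly a n).continuous.continuousOn (by positivity : (0 : ℝ) < (1 / 2) ^ n)
    obtain ⟨x, hx, hxE⟩ := (hE n (m n)).exists_add_mul_mem ((derivative^[m n] S).eval (a n))
      (eval_iterate_derivative_nodePoly_ne_zero a n (a n)) hsmall
    refine ⟨x, hx, ?_⟩
    simpa [iterate_map_add, iterate_derivative_C_mul] using hxE
  set f : ℂ → ℂ := fun z => ∑' n, c n * (nodePoly a n).eval z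
  have hconv : TendstoLocallyUniformly
      (fun N z => (∑ k ∈ range N, C (c k) * nodePoly a k).eval z) f atTop := by
    simpa [eval_finsetSum] using tendstoLocallyUniformly_sum_range_of_norm_le_on_closedBall
      summable_geometric_two fun n => (hc n).1
  have hdiff : Differentiable ℂ f := by
    rw [← differentiableOn_univ]
    exact (tendstoLocallyUniformlyOn_univ.mpr hconv).differentiableOn
      (Eventually.of_forall fun N => (Polynomial.differentiable _).differentiableOn) isOpen_univ
  refine ⟨f, hdiff, fun n s => ?_⟩
  set n₀ := Nat.nth (fun k => a k = a n) s
  have hn₀ : a n₀ = a n := Nat.nth_mem_of_infinite (ha n) s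
  have hcount₀ : Nat.count (fun k => a k = a n) n₀ = s := Nat.count_nth_of_infinite (ha n) s
  have hvanish : ∀ k ≥ n₀ + 1, (derivative^[s] (C (c k) * nodePoly a k)).eval (a n) = 0 := by
    intro k hk
    have hs : s < Nat.count (fun j => a j = a n) k :=
      calc s < Nat.count (fun j => a j = a n) (n₀ + 1) := by simp [Nat.count_succ, hn₀, hcount₀]
        _ ≤ _ := Nat.count_monotone _ hk
    rw [iterate_derivative_C_mul, eval_mul, eval_C, eval_iterate_derivative_nodePoly_eq_zero a hs,
      mul_zero]
  rw [iteratedDeriv_eq_eval_sum_range_of_eval_iterate_derivative_eq_zero hconv hvanish]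
  simpa [hm, hn₀, hcount₀] using (hc n₀).2

theorem exists_differentiable_forall_iteratedDeriv_mem {A : Set ℂ} (hA : A.Countable)
    {E : ℂ → ℕ → Set ℂ} (hE : ∀ α ∈ A, ∀ s, Dense (E α s)) :
    ∃ f : ℂ → ℂ, Differentiable ℂ f ∧ ∀ α ∈ A, ∀ s, iteratedDeriv s f α ∈ E α s := by
  rcases A.eq_empty_or_nonempty with rfl | hne
  · exact ⟨0, differentiable_const 0, by simp⟩
  obtain ⟨g, rfl⟩ := hA.exists_eq_range hne
  have hinf : ∀ n, {k | g (Nat.unpair k).1 = g (Nat.unpair n).1}.Infinite := fun n =>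
    Set.infinite_of_injective_forall_mem (f := fun j => Nat.pair (Nat.unpair n).1 j)
      (fun j j' h => by simpa using congrArg (fun m => (Nat.unpair m).2) h) (fun j => by simp)
  obtain ⟨f, hf, hfE⟩ := exists_differentiable_forall_iteratedDeriv_mem_of_infinite
    (fun k => g (Nat.unpair k).1) hinf E fun n s => hE _ (Set.mem_range_self _) s
  refine ⟨f, hf, ?_⟩
  rintro _ ⟨i, rfl⟩ s
  simpa using hfE (Nat.pair i 0) s

theorem stmt_0 (A : Set ℂ) (hA : A.Countable)
    (E : ℂ → ℕ → Set ℂ) (hE : ∀ α ∈ A, ∀ s : ℕ, Dense (E α s)) :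
    ∃ f : ℂ → ℂ, Differentiable ℂ f ∧
      (∀ p : Polynomial ℂ, f ≠ fun z => p.eval z) ∧
      ∀ α ∈ A, ∀ s : ℕ, iteratedDeriv s f α ∈ E α s := by
  obtain ⟨β, hβ⟩ := (hA.dense_compl ℂ).nonempty
  have hne : ∀ α ∈ A, α ≠ β := fun α hα h => hβ (h ▸ hα)
  obtain ⟨f, hf, hfE⟩ := exists_differentiable_forall_iteratedDeriv_mem (hA.insert β)
    (E := Function.update E β fun _ => {0}ᶜ) <| by
      rintro α (rfl | hα) s
      · simpa using dense_compl_singleton 0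
      · simpa [Function.update_of_ne (hne α hα)] using hE α hα s
  refine ⟨f, hf, fun p hp => ?_, fun α hα s => ?_⟩
  · simpa [hp, Polynomial.iteratedDeriv_natDegree_succ] using
      hfE β (Set.mem_insert _ _) (p.natDegree + 1)
  · simpa [Function.update_of_ne (hne α hα)] using hfE α (Set.mem_insert_of_mem _ hα) s
end

section
/- Let (α_j)_{j≥1} be a sequence of pairwise distinct complex numbers. For each integer n ≥ 1 write n = m_n(m_n+1)/2 + j_n where m_n ≥ 0 and 1 ≤ j_n ≤ m_n + 1, and set i_n = m_n + 1 − j_n. Define polynomials by P_0(z) = 1 and P_n(z) = (z − α_{j_n}) P_{n−1}(z) for n ≥ 1. Then for every n ≥ 1, the i_n-th derivative of P_{n−1} evaluated at α_{j_n} is nonzero: P_{n−1}^{(i_n)}(α_{j_n}) ≠ 0. -/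
/-- The sequence of polynomials `P_0 = 1`, `P_n = (X - α_{j_n}) * P_{n-1}`. -/
noncomputable def Pseq (α : ℕ → ℂ) (j : ℕ → ℕ) : ℕ → Polynomial ℂ
  | 0 => 1
  | n + 1 => (Polynomial.X - Polynomial.C (α (j (n + 1)))) * Pseq α j n

/-- The triangular numbers. -/
def Tri (a : ℕ) : ℕ := a * (a + 1) / 2

lemma Tri_succ (a : ℕ) : Tri (a + 1) = Tri a + (a + 1) := by
  unfold Tri
  rw [show (a + 1) * (a + 1 + 1) = a * (a + 1) + (a + 1) * 2 by ring,
    Nat.add_mul_div_right _ _ two_pos]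

lemma Tri_mono : Monotone Tri := by
  intro a b hab
  exact Nat.div_le_div_right (Nat.mul_le_mul hab (by omega))

lemma Tri_strictMono : StrictMono Tri := by
  intro a b hab
  calc Tri a < Tri a + (a + 1) := by omega
    _ = Tri (a + 1) := (Tri_succ a).symm
    _ ≤ Tri b := Tri_mono hab

/-- Uniqueness of the triangular decomposition. -/
lemma tri_unique {a b a' b' : ℕ} (hb : 1 ≤ b) (hb' : b ≤ a + 1) (hc : 1 ≤ b')
    (hc' : b' ≤ a' + 1) (h : Tri a + b = Tri a' + b') : a = a' ∧ b = b' := by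
  have key : ∀ x y u v : ℕ, 1 ≤ y → y ≤ x + 1 → 1 ≤ v → v ≤ u + 1 →
      Tri x + y = Tri u + v → x ≤ u := by
    intro x y u v hy hy' hv hv' heq
    by_contra hxu
    push_neg at hxu
    have h1 : Tri (u + 1) ≤ Tri x := Tri_mono hxu
    have h2 : Tri (u + 1) = Tri u + (u + 1) := Tri_succ u
    omega
  have h1 : a ≤ a' := key a b a' b' hb hb' hc hc' h
  have h2 : a' ≤ a := key a' b' a b hc hc' hb hb' h.symm
  have : a = a' := le_antisymm h1 h2
  subst this
  exact ⟨rfl, by omega⟩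

lemma Pseq_eq_prod (α : ℕ → ℂ) (j : ℕ → ℕ) (N : ℕ) :
    Pseq α j N = ∏ k ∈ Finset.Icc 1 N, (Polynomial.X - Polynomial.C (α (j k))) := by
  induction N with
  | zero => simp [Pseq]
  | succ N ih =>
    rw [show Pseq α j (N + 1)
        = (Polynomial.X - Polynomial.C (α (j (N + 1)))) * Pseq α j N from rfl, ih,
      Finset.prod_Icc_succ_top (by omega)]
    ring

lemma Pseq_roots (α : ℕ → ℂ) (j : ℕ → ℕ) (N : ℕ) :
    (Pseq α j N).roots = (Finset.Icc 1 N).val.map (fun k => α (j k)) := by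
  rw [Pseq_eq_prod]
  have : ∏ k ∈ Finset.Icc 1 N, (Polynomial.X - Polynomial.C (α (j k)))
      = (Multiset.map (fun a => Polynomial.X - Polynomial.C a)
          ((Finset.Icc 1 N).val.map (fun k => α (j k)))).prod := by
    rw [Multiset.map_map]
    rfl
  rw [this, Polynomial.roots_multiset_prod_X_sub_C]

lemma Pseq_ne_zero (α : ℕ → ℂ) (j : ℕ → ℕ) (N : ℕ) : Pseq α j N ≠ 0 := by
  rw [Pseq_eq_prod]
  exact Finset.prod_ne_zero_iff.mpr fun k _ => Polynomial.X_sub_C_ne_zero _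

theorem stmt_4 (α : ℕ → ℂ)
    (hα : ∀ ⦃k l : ℕ⦄, 1 ≤ k → 1 ≤ l → α k = α l → k = l)
    (m j : ℕ → ℕ)
    (hmj : ∀ n : ℕ, 1 ≤ n → 1 ≤ j n ∧ j n ≤ m n + 1 ∧ n = m n * (m n + 1) / 2 + j n) :
    ∀ n : ℕ, 1 ≤ n →
      (Polynomial.derivative^[m n + 1 - j n] (Pseq α j (n - 1))).eval (α (j n)) ≠ 0 := by
  have hmj' : ∀ n : ℕ, 1 ≤ n → 1 ≤ j n ∧ j n ≤ m n + 1 ∧ n = Tri (m n) + j n := hmj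
  intro n hn
  obtain ⟨hJ1, hJ2, hn_eq⟩ := hmj' n hn
  -- the root multiplicity of α (j n) in Pseq α j (n-1) is exactly m n + 1 - j n
  have hmult : (Pseq α j (n - 1)).rootMultiplicity (α (j n)) = m n + 1 - j n := by
    have hcount : (Pseq α j (n - 1)).rootMultiplicity (α (j n))
        = (Pseq α j (n - 1)).roots.count (α (j n)) :=
      (Polynomial.count_roots _).symm
    rw [hcount, Pseq_roots, Multiset.count_map]
    have heq : Multiset.filter (fun k => α (j n) = α (j k)) (Finset.Icc 1 (n - 1)).val
        = ((Finset.Icc 1 (n - 1)).filter (fun k => α (j n) = α (j k))).val := rfl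
    rw [heq]
    change ((Finset.Icc 1 (n - 1)).filter (fun k => α (j n) = α (j k))).card
        = m n + 1 - j n
    have hset : (Finset.Icc 1 (n - 1)).filter (fun k => α (j n) = α (j k))
        = (Finset.Ico (j n - 1) (m n)).image (fun a => Tri a + j n) := by
      ext k
      simp only [Finset.mem_filter, Finset.mem_Icc, Finset.mem_image, Finset.mem_Ico]
      constructor
      · rintro ⟨⟨hk1, hk2⟩, hαk⟩
        obtain ⟨hjk1, hjk2, hk_eq⟩ := hmj' k hk1
        have hjkJ : j k = j n := hα hjk1 hJ1 hαk.symm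
        refine ⟨m k, ⟨by omega, ?_⟩, by omega⟩
        by_contra hMk
        push_neg at hMk
        have hTT : Tri (m n) ≤ Tri (m k) := Tri_mono hMk
        omega
      · rintro ⟨a, ⟨ha1, ha2⟩, hk_eq⟩
        have hk1 : 1 ≤ k := by omega
        obtain ⟨hjk1, hjk2, hk_eq'⟩ := hmj' k hk1
        have huniq : m k = a ∧ j k = j n := by
          apply tri_unique hjk1 hjk2 hJ1 (by omega)
          omega
        have hkle : k ≤ n - 1 := by
          have h1 : Tri (a + 1) = Tri a + (a + 1) := Tri_succ a
          have h2 : Tri (a + 1) ≤ Tri (m n) := Tri_mono (by omega)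
          omega
        exact ⟨⟨hk1, hkle⟩, by rw [huniq.2]⟩
    rw [hset, Finset.card_image_of_injOn, Nat.card_Ico]
    · omega
    · intro a _ b _ hab
      have hab' : Tri a + j n = Tri b + j n := hab
      exact Tri_strictMono.injective (by omega)
  intro hzero
  have hroot : ∀ i ≤ m n + 1 - j n,
      (Polynomial.derivative^[i] (Pseq α j (n - 1))).IsRoot (α (j n)) := by
    intro i hi
    rcases lt_or_eq_of_le hi with hi | hi
    · exact Polynomial.isRoot_iterate_derivative_of_lt_rootMultiplicity (by omega)
    · rw [hi]; exact hzero
  have hlt := Polynomial.lt_rootMultiplicity_of_isRoot_iterate_derivative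
    (Pseq_ne_zero α j (n - 1)) hroot
  omega
end

section
/- Let (α_j)_{j≥1} be a sequence of pairwise distinct complex numbers. For each integer n ≥ 1 write n = m_n(m_n+1)/2 + j_n where m_n ≥ 0 and 1 ≤ j_n ≤ m_n + 1, and set i_n = m_n + 1 − j_n. Define polynomials by P_0(z) = 1 and P_n(z) = (z − α_{j_n}) P_{n−1}(z) for n ≥ 1. Then for every n ≥ 1 and every l ≥ n, the i_n-th derivative of P_l vanishes at α_{j_n}: P_l^{(i_n)}(α_{j_n}) = 0. -/
namespace Stmt5Aux

open Polynomial Finset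

def T (m : ℕ) : ℕ := m * (m + 1) / 2

lemma T_succ (m : ℕ) : T (m + 1) = T m + (m + 1) := by
  unfold T
  have h : (m + 1) * (m + 1 + 1) = m * (m + 1) + (m + 1) * 2 := by ring
  rw [h, Nat.add_mul_div_right _ _ (by norm_num : 0 < 2)]

lemma T_mono : StrictMono T := strictMono_nat_of_lt_succ fun m => by
  rw [T_succ]; omega

lemma T_unique {m j m' j' : ℕ} (hj : 1 ≤ j) (hjm : j ≤ m + 1)
    (hj' : 1 ≤ j') (hjm' : j' ≤ m' + 1) (h : T m + j = T m' + j') :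
    m = m' ∧ j = j' := by
  rcases lt_trichotomy m m' with hlt | heq | hgt
  · exfalso
    have h1 : T (m + 1) ≤ T m' := T_mono.le_iff_le.mpr hlt
    rw [T_succ] at h1; omega
  · constructor
    · exact heq
    · subst heq; omega
  · exfalso
    have h1 : T (m' + 1) ≤ T m := T_mono.le_iff_le.mpr hgt
    rw [T_succ] at h1; omega

lemma Pseq_monic (α : ℕ → ℂ) (j : ℕ → ℕ) : ∀ l, (Pseq α j l).Monic := by
  intro l
  induction l with
  | zero => exact monic_one
  | succ l ih => exact (monic_X_sub_C _).mul ih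

lemma pow_dvd_Pseq (α : ℕ → ℂ) (j : ℕ → ℕ) (a : ℂ) (l : ℕ) :
    (X - C a) ^ ((Finset.Icc 1 l).filter (fun k => α (j k) = a)).card ∣ Pseq α j l := by
  induction l with
  | zero => simp
  | succ l ih =>
    have hins : Finset.Icc 1 (l + 1) = insert (l + 1) (Finset.Icc 1 l) := by
      ext x; simp [Finset.mem_Icc, Finset.mem_insert]; omega
    rw [hins, Finset.filter_insert]
    by_cases h : α (j (l + 1)) = a
    · rw [if_pos h, Finset.card_insert_of_notMem (by simp)]
      rw [pow_succ, Pseq, h]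
      exact mul_dvd_mul_right (dvd_refl _) _ |>.trans
        (by rw [mul_comm]; exact mul_dvd_mul_left _ ih) |>.trans
        (dvd_refl _)
    · rw [if_neg h]
      exact ih.trans (Dvd.intro_left _ rfl)

end Stmt5Aux

theorem stmt_5 (α : ℕ → ℂ)
    (hα : ∀ ⦃k l : ℕ⦄, 1 ≤ k → 1 ≤ l → α k = α l → k = l)
    (m j : ℕ → ℕ)
    (hmj : ∀ n : ℕ, 1 ≤ n → 1 ≤ j n ∧ j n ≤ m n + 1 ∧ n = m n * (m n + 1) / 2 + j n) :
    ∀ n l : ℕ, 1 ≤ n → n ≤ l →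
      (Polynomial.derivative^[m n + 1 - j n] (Pseq α j l)).eval (α (j n)) = 0 := by
  open Polynomial Stmt5Aux in
  intro n l hn hnl
  obtain ⟨hj1, hjm, hneq⟩ := hmj n hn
  set M := m n with hM
  set J := j n with hJ
  have hneq' : n = T M + J := hneq
  -- the image set
  have key : ∀ m' ∈ Finset.Icc (J - 1) M, j (T m' + J) = J ∧ 1 ≤ T m' + J ∧ T m' + J ≤ l := by
    intro m' hm'
    rw [Finset.mem_Icc] at hm'
    have hJm' : J ≤ m' + 1 := by omega
    have hp1 : 1 ≤ T m' + J := by omega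
    have hple : T m' + J ≤ l := by
      have : T m' ≤ T M := T_mono.le_iff_le.mpr hm'.2
      omega
    obtain ⟨h1, h2, h3⟩ := hmj (T m' + J) hp1
    have h3' : T m' + J = T (m (T m' + J)) + j (T m' + J) := h3
    have := T_unique h1 h2 hj1 hJm' h3'.symm
    exact ⟨this.2, hp1, hple⟩
  -- count the roots
  set S := (Finset.Icc (J - 1) M).image (fun m' => T m' + J) with hS
  have hScard : S.card = M + 2 - J := by
    rw [hS, Finset.card_image_of_injective _ (fun a b hab => T_mono.injective (by omega)),
      Nat.card_Icc]
    omega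
  have hSsub : S ⊆ (Finset.Icc 1 l).filter (fun k => α (j k) = α J) := by
    intro x hx
    rw [hS, Finset.mem_image] at hx
    obtain ⟨m', hm', rfl⟩ := hx
    obtain ⟨hjx, h1, h2⟩ := key m' hm'
    rw [Finset.mem_filter, Finset.mem_Icc, hjx]
    exact ⟨⟨h1, h2⟩, rfl⟩
  have hcard : M + 2 - J ≤ ((Finset.Icc 1 l).filter (fun k => α (j k) = α J)).card := by
    rw [← hScard]; exact Finset.card_le_card hSsub
  have hdvd : (X - C (α J)) ^ (M + 2 - J) ∣ Pseq α j l :=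
    (pow_dvd_pow _ hcard).trans (pow_dvd_Pseq α j (α J) l)
  have hne : Pseq α j l ≠ 0 := (Pseq_monic α j l).ne_zero
  have hmult : M + 2 - J ≤ (Pseq α j l).rootMultiplicity (α J) :=
    (Polynomial.le_rootMultiplicity_iff hne).mpr hdvd
  have hlt : M + 1 - J < (Pseq α j l).rootMultiplicity (α J) := by omega
  exact Polynomial.isRoot_iterate_derivative_of_lt_rootMultiplicity hlt
end

section
/- Let (α_j)_{j≥1} be a sequence of pairwise distinct complex numbers, and define the polynomials P_n by P_0(z) = 1 and P_n(z) = (z − α_{j_n}) P_{n−1}(z) for n ≥ 1, where j_n is determined by writing n = m_n(m_n+1)/2 + j_n with m_n ≥ 0 and 1 ≤ j_n ≤ m_n + 1. Let (C_n)_{n≥0} be positive constants with |P_n(z)| ≤ C_n · (max{|z|, 1})^n for all z ∈ ℂ. If (a_k)_{k≥0} and (b_k)_{k≥0} are sequences of complex numbers with |a_k| ≤ 1/(C_k · k!) and |b_k| ≤ 1/(C_k · k!) for all k, and ∑_{k=0}^∞ a_k P_k(z) = ∑_{k=0}^∞ b_k P_k(z) for all z ∈ ℂ, then a_k = b_k for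 every k ≥ 0. -/
open Polynomial Finset Metric

open scoped Nat

section Pseq

variable (α : ℕ → ℂ) (j : ℕ → ℕ)

/-- The quotient `P_n / P_K` for `K ≤ n`. -/
noncomputable def PseqTail (K n : ℕ) : ℂ[X] :=
  ∏ i ∈ Ioc K n, (X - C (α (j i)))

lemma Pseq_eq_prod_s9 (n : ℕ) : Pseq α j n = ∏ i ∈ Ioc 0 n, (X - C (α (j i))) := by
  induction n with
  | zero => simp [Pseq]
  | succ n ih =>
    rw [Pseq, ih, prod_Ioc_succ_top (Nat.zero_le _)]
    ring

lemma Pseq_eq_mul_PseqTail {K n : ℕ} (h : K ≤ n) :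
    Pseq α j n = Pseq α j K * PseqTail α j K n := by
  rw [Pseq_eq_prod_s9, Pseq_eq_prod_s9, PseqTail, prod_Ioc_consecutive _ (Nat.zero_le K) h]

lemma Pseq_monic (n : ℕ) : (Pseq α j n).Monic := by
  rw [Pseq_eq_prod_s9]
  exact monic_prod_of_monic _ _ fun i _ => monic_X_sub_C _

lemma PseqTail_self (K : ℕ) : PseqTail α j K K = 1 := by
  simp [PseqTail]

lemma eval_PseqTail_eq_zero {K n : ℕ} (h : K < n) :
    (PseqTail α j K n).eval (α (j (K + 1))) = 0 := by
  rw [PseqTail, eval_prod]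
  exact prod_eq_zero (i := K + 1) (mem_Ioc.2 ⟨K.lt_succ_self, h⟩) (by simp)

lemma one_le_norm_eval_Pseq {K : ℕ} {z : ℂ} (hz : 1 + ∑ i ∈ Ioc 0 K, ‖α (j i)‖ ≤ ‖z‖) :
    1 ≤ ‖(Pseq α j K).eval z‖ := by
  rw [Pseq_eq_prod_s9, eval_prod, norm_prod]
  refine one_le_prod fun i hi => ?_
  have hαi : ‖α (j i)‖ ≤ ∑ i ∈ Ioc 0 K, ‖α (j i)‖ :=
    single_le_sum (f := fun i => ‖α (j i)‖) (fun i _ => norm_nonneg _) hi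
  simp only [eval_sub, eval_X, eval_C]
  linarith [norm_sub_norm_le z (α (j i))]

lemma norm_eval_PseqTail_le {B : ℝ} {K n : ℕ} (hKn : K ≤ n)
    (hP : ∀ z : ℂ, ‖(Pseq α j n).eval z‖ ≤ B * max ‖z‖ 1 ^ n) {R : ℝ}
    (hR : 1 + ∑ i ∈ Ioc 0 K, ‖α (j i)‖ ≤ R) {x : ℂ} (hx : ‖x‖ ≤ R) :
    ‖(PseqTail α j K n).eval x‖ ≤ B * R ^ n := by
  have hR1 : 1 ≤ R := by linarith [sum_nonneg fun i (_ : i ∈ Ioc 0 K) => norm_nonneg (α (j i))]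
  have hR0 : R ≠ 0 := by positivity
  refine Complex.norm_le_of_forall_mem_frontier_norm_le isBounded_ball
    (PseqTail α j K n).differentiable.diffContOnCl (fun z hz => ?_)
    (by rwa [closure_ball 0 hR0, mem_closedBall_zero_iff])
  rw [frontier_ball 0 hR0, mem_sphere_zero_iff_norm] at hz
  calc ‖(PseqTail α j K n).eval z‖
      ≤ ‖(Pseq α j K).eval z‖ * ‖(PseqTail α j K n).eval z‖ :=
        le_mul_of_one_le_left (norm_nonneg _) (one_le_norm_eval_Pseq α j (hz ▸ hR))
    _ = ‖(Pseq α j n).eval z‖ := by rw [Pseq_eq_mul_PseqTail α j hKn, eval_mul, norm_mul]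
    _ ≤ B * max ‖z‖ 1 ^ n := hP z
    _ = B * R ^ n := by rw [hz, max_eq_left hR1]

end Pseq

lemma norm_mul_le_mul_pow_div_factorial {c p : ℂ} {B M r : ℝ} {k : ℕ} (hB : 0 < B)
    (hc : ‖c‖ ≤ M / (B * k !)) (hp : ‖p‖ ≤ B * r ^ k) :
    ‖c * p‖ ≤ M * (r ^ k / k !) := by
  have hk : (0 : ℝ) < k ! := mod_cast k.factorial_pos
  calc ‖c * p‖ = ‖c‖ * ‖p‖ := norm_mul c p
    _ ≤ M / (B * k !) * (B * r ^ k) :=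
        mul_le_mul hc hp (norm_nonneg p) ((norm_nonneg c).trans hc)
    _ = M * (r ^ k / k !) := by field_simp

lemma Continuous.eq_zero_of_eval_ne_zero {𝕜 E : Type*} [NontriviallyNormedField 𝕜]
    [CompleteSpace 𝕜] [TopologicalSpace E] [T2Space E] [Zero E] {p : 𝕜[X]} (hp : p ≠ 0)
    {g : 𝕜 → E} (hg : Continuous g) (h : ∀ z, p.eval z ≠ 0 → g z = 0) : g = 0 :=
  hg.ext_on ((finite_setOfPred_isRoot hp).countable.dense_compl 𝕜) continuous_const h

section Uniqueness

variable {α : ℕ → ℂ} {j : ℕ → ℕ} {C : ℕ → ℝ} {c : ℕ → ℂ} {M : ℝ}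

lemma summable_mul_eval_Pseq (hCpos : ∀ n, 0 < C n)
    (hP : ∀ n z, ‖(Pseq α j n).eval z‖ ≤ C n * max ‖z‖ 1 ^ n)
    (hc : ∀ k, ‖c k‖ ≤ M / (C k * k !)) (z : ℂ) :
    Summable fun k => c k * (Pseq α j k).eval z :=
  ((Real.summable_pow_div_factorial _).mul_left M).of_norm_bounded
    fun k => norm_mul_le_mul_pow_div_factorial (hCpos k) (hc k) (hP k z)

lemma continuous_tsum_mul_eval_PseqTail (hCpos : ∀ n, 0 < C n)
    (hP : ∀ n z, ‖(Pseq α j n).eval z‖ ≤ C n * max ‖z‖ 1 ^ n)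
    (hc : ∀ k, ‖c k‖ ≤ M / (C k * k !)) (K : ℕ) :
    Continuous fun x => ∑' k, c (k + K) * (PseqTail α j K (k + K)).eval x := by
  refine continuous_iff_continuousAt.2 fun x₀ => ?_
  set R := max (1 + ∑ i ∈ Ioc 0 K, ‖α (j i)‖) (‖x₀‖ + 1)
  have hcont : ContinuousOn (fun x => ∑' k, c (k + K) * (PseqTail α j K (k + K)).eval x)
      (closedBall 0 R) :=
    continuousOn_tsum (fun k => (continuous_const.mul (PseqTail α j K _).continuous).continuousOn)
      ((summable_nat_add_iff K).2 ((Real.summable_pow_div_factorial R).mul_left M))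
      fun k x hx => norm_mul_le_mul_pow_div_factorial (hCpos _) (hc _)
        (norm_eval_PseqTail_le α j (K.le_add_left k) (hP _) (le_max_left _ _)
          (mem_closedBall_zero_iff.1 hx))
  exact hcont.continuousAt (closedBall_mem_nhds_of_mem (by simp [R]))

lemma eq_zero_of_forall_lt_eq_zero (hCpos : ∀ n, 0 < C n)
    (hP : ∀ n z, ‖(Pseq α j n).eval z‖ ≤ C n * max ‖z‖ 1 ^ n)
    (hc : ∀ k, ‖c k‖ ≤ M / (C k * k !)) (hsum : ∀ z, ∑' k, c k * (Pseq α j k).eval z = 0)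
    {K : ℕ} (hlt : ∀ k < K, c k = 0) : c K = 0 := by
  set g := fun x => ∑' k, c (k + K) * (PseqTail α j K (k + K)).eval x
  have hPg : ∀ z, (Pseq α j K).eval z * g z = 0 := fun z => by
    have hsplit := (summable_mul_eval_Pseq hCpos hP hc z).sum_add_tsum_nat_add K
    rw [sum_eq_zero fun k hk => by rw [hlt k (mem_range.1 hk), zero_mul], zero_add,
      hsum z] at hsplit
    rw [← hsplit, ← tsum_mul_left]
    congr 1 with k
    rw [Pseq_eq_mul_PseqTail α j (K.le_add_left k), eval_mul]
    ring
  have hg : g = 0 := (continuous_tsum_mul_eval_PseqTail hCpos hP hc K).eq_zero_of_eval_ne_zero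
    (Pseq_monic α j K).ne_zero fun z hz => (mul_eq_zero.1 (hPg z)).resolve_left hz
  have hgα : g (α (j (K + 1))) = c K := by
    simp only [g]
    rw [tsum_eq_single 0 fun k hk => by
      rw [eval_PseqTail_eq_zero α j (by omega), mul_zero]]
    simp [PseqTail_self]
  rw [← hgα, hg, Pi.zero_apply]

theorem eq_zero_of_tsum_mul_eval_Pseq_eq_zero (hCpos : ∀ n, 0 < C n)
    (hP : ∀ n z, ‖(Pseq α j n).eval z‖ ≤ C n * max ‖z‖ 1 ^ n)
    (hc : ∀ k, ‖c k‖ ≤ M / (C k * k !)) (hsum : ∀ z, ∑' k, c k * (Pseq α j k).eval z = 0)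
    (k : ℕ) : c k = 0 := by
  induction k using Nat.strong_induction_on with
  | _ K ih => exact eq_zero_of_forall_lt_eq_zero hCpos hP hc hsum ih

end Uniqueness

theorem stmt_9_general (α : ℕ → ℂ)
    (j : ℕ → ℕ)
    (C : ℕ → ℝ) (hCpos : ∀ n : ℕ, 0 < C n)
    (hPbound : ∀ n : ℕ, ∀ z : ℂ, ‖(Pseq α j n).eval z‖ ≤ C n * max ‖z‖ 1 ^ n)
    (a b : ℕ → ℂ)
    (ha : ∀ k : ℕ, ‖a k‖ ≤ 1 / (C k * k.factorial))
    (hb : ∀ k : ℕ, ‖b k‖ ≤ 1 / (C k * k.factorial))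
    (hab : ∀ z : ℂ, ∑' k : ℕ, a k * (Pseq α j k).eval z = ∑' k : ℕ, b k * (Pseq α j k).eval z) :
    ∀ k : ℕ, a k = b k := by
  have hsub : ∀ k, ‖a k - b k‖ ≤ 2 / (C k * k !) := fun k => by
    calc ‖a k - b k‖ ≤ ‖a k‖ + ‖b k‖ := norm_sub_le _ _
      _ ≤ 1 / (C k * k !) + 1 / (C k * k !) := add_le_add (ha k) (hb k)
      _ = 2 / (C k * k !) := by ring
  have hzero : ∀ z, ∑' k, (a k - b k) * (Pseq α j k).eval z = 0 := fun z => by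
    simp_rw [sub_mul]
    rw [(summable_mul_eval_Pseq hCpos hPbound ha z).tsum_sub
      (summable_mul_eval_Pseq hCpos hPbound hb z), hab z, sub_self]
  exact fun k => sub_eq_zero.1 (eq_zero_of_tsum_mul_eval_Pseq_eq_zero hCpos hPbound hsub hzero k)

theorem stmt_9 (α : ℕ → ℂ)
    (hα : ∀ ⦃k l : ℕ⦄, 1 ≤ k → 1 ≤ l → α k = α l → k = l)
    (m j : ℕ → ℕ)
    (hmj : ∀ n : ℕ, 1 ≤ n → 1 ≤ j n ∧ j n ≤ m n + 1 ∧ n = m n * (m n + 1) / 2 + j n)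
    (C : ℕ → ℝ) (hCpos : ∀ n : ℕ, 0 < C n)
    (hPbound : ∀ n : ℕ, ∀ z : ℂ, ‖(Pseq α j n).eval z‖ ≤ C n * max ‖z‖ 1 ^ n)
    (a b : ℕ → ℂ)
    (ha : ∀ k : ℕ, ‖a k‖ ≤ 1 / (C k * k.factorial))
    (hb : ∀ k : ℕ, ‖b k‖ ≤ 1 / (C k * k.factorial))
    (hab : ∀ z : ℂ, ∑' k : ℕ, a k * (Pseq α j k).eval z = ∑' k : ℕ, b k * (Pseq α j k).eval z) :
    ∀ k : ℕ, a k = b k :=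
  stmt_9_general α j C hCpos hPbound a b ha hb hab
end
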